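/- arXiv:2308.09576 — 2 statements merged into one kernel-verified Lean document; each statement's English description precedes it below -/
import Mathlib

section
/- Let A be a finite-dimensional algebra over a field K and θ : K₀(A) → ℤ additive. If V and W are θ-stable A-modules and f : V → W is a nonzero A-module homomorphism, then f is an isomorphism. -/
universe u

/-- A module `V` is θ-semistable if `θ V = 0` and `θ U ≤ 0` for every submodule `U ⊆ V`. -/
def IsSemistable (A : Type u) [Ring A]
    (θ : ∀ (V : Type u) [AddCommGroup V] [Module A V], ℤ)
    (V : Type u) [AddCommGroup V] [Module A V] : Prop :=
  θ V = 0 ∧ ∀ U : Submodule A V, θ ↥U ≤ 0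

/-- A module `V` is θ-stable if it is nonzero, `θ V = 0`, and `θ U < 0`
for every nonzero proper submodule `U ⊆ V`. -/
def IsStable (A : Type u) [Ring A]
    (θ : ∀ (V : Type u) [AddCommGroup V] [Module A V], ℤ)
    (V : Type u) [AddCommGroup V] [Module A V] : Prop :=
  Nontrivial V ∧ θ V = 0 ∧ ∀ U : Submodule A V, U ≠ ⊥ → U ≠ ⊤ → θ ↥U < 0


theorem stmt_3
    (K : Type u) [Field K] (A : Type u) [Ring A] [Algebra K A] [FiniteDimensional K A]
    (θ : ∀ (V : Type u) [AddCommGroup V] [Module A V], ℤ)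
    (hθiso : ∀ (V W : Type u) [AddCommGroup V] [Module A V] [AddCommGroup W] [Module A W],
      (V ≃ₗ[A] W) → θ V = θ W)
    (hθadd : ∀ (V : Type u) [AddCommGroup V] [Module A V] (U : Submodule A V),
      θ V = θ ↥U + θ (V ⧸ U))
    (V W : Type u) [AddCommGroup V] [Module A V] [Module K V] [IsScalarTower K A V]
    [FiniteDimensional K V]
    [AddCommGroup W] [Module A W] [Module K W] [IsScalarTower K A W] [FiniteDimensional K W]
    (hV : IsStable A θ V) (hW : IsStable A θ W)
    (f : V →ₗ[A] W) (hf : f ≠ 0) :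
    Function.Bijective f := by
  obtain ⟨hVnt, hVθ, hVsub⟩ := hV
  obtain ⟨hWnt, hWθ, hWsub⟩ := hW
  have hker_ne_top : LinearMap.ker f ≠ ⊤ := fun h => hf (LinearMap.ker_eq_top.mp h)
  have hrange_ne_bot : LinearMap.range f ≠ ⊥ := fun h => hf (LinearMap.range_eq_bot.mp h)
  have hbotV : θ ↥(⊥ : Submodule A V) = 0 := by
    have h := hθadd V ⊥
    rw [hθiso _ _ (Submodule.quotEquivOfEqBot (⊥ : Submodule A V) rfl)] at h
    omega
  have hsum : θ V = θ ↥(LinearMap.ker f) + θ ↥(LinearMap.range f) := by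
    have h := hθadd V (LinearMap.ker f)
    rwa [hθiso _ _ f.quotKerEquivRange] at h
  have hrange_le : θ ↥(LinearMap.range f) ≤ 0 := by
    by_cases h : LinearMap.range f = ⊤
    · rw [h, hθiso _ _ (Submodule.topEquiv (R := A) (M := W)), hWθ]
    · exact le_of_lt (hWsub _ hrange_ne_bot h)
  have hker_bot : LinearMap.ker f = ⊥ := by
    by_contra hk
    have := hVsub _ hk hker_ne_top
    omega
  have hrange_top : LinearMap.range f = ⊤ := by
    by_contra hr
    have := hWsub _ hrange_ne_bot hr
    rw [hker_bot] at hsum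
    omega
  exact ⟨LinearMap.ker_eq_bot.mp hker_bot, LinearMap.range_eq_top.mp hrange_top⟩
end

section
/- Let A be a finite-dimensional algebra over a field K and θ : K₀(A) → ℤ additive. If V and W are non-isomorphic θ-stable A-modules, then Hom_A(V, W) = 0. -/
universe u

theorem stmt_4
    (K : Type u) [Field K] (A : Type u) [Ring A] [Algebra K A] [FiniteDimensional K A]
    (θ : ∀ (V : Type u) [AddCommGroup V] [Module A V], ℤ)
    (hθiso : ∀ (V W : Type u) [AddCommGroup V] [Module A V] [AddCommGroup W] [Module A W],
      (V ≃ₗ[A] W) → θ V = θ W)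
    (hθadd : ∀ (V : Type u) [AddCommGroup V] [Module A V] (U : Submodule A V),
      θ V = θ ↥U + θ (V ⧸ U))
    (V W : Type u) [AddCommGroup V] [Module A V] [Module K V] [IsScalarTower K A V]
    [FiniteDimensional K V]
    [AddCommGroup W] [Module A W] [Module K W] [IsScalarTower K A W] [FiniteDimensional K W]
    (hV : IsStable A θ V) (hW : IsStable A θ W)
    (hniso : IsEmpty (V ≃ₗ[A] W)) :
    ∀ f : V →ₗ[A] W, f = 0 := by
  intro f
  by_contra hf
  obtain ⟨hVnt, hVθ, hVsub⟩ := hV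
  obtain ⟨hWnt, hWθ, hWsub⟩ := hW
  have hker : LinearMap.ker f ≠ ⊤ := by
    intro h
    exact hf (LinearMap.ker_eq_top.mp h)
  have hrange : LinearMap.range f ≠ ⊥ := by
    intro h
    exact hf (LinearMap.range_eq_bot.mp h)
  have hquot : θ (V ⧸ LinearMap.ker f) = θ ↥(LinearMap.range f) :=
    hθiso _ _ f.quotKerEquivRange
  have htop : θ ↥(⊤ : Submodule A W) = θ W := hθiso _ _ (Submodule.topEquiv)
  have hadd := hθadd V (LinearMap.ker f)
  by_cases hk : LinearMap.ker f = ⊥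
  · have e : V ≃ₗ[A] ↥(LinearMap.range f) :=
      LinearEquiv.ofInjective f (LinearMap.ker_eq_bot.mp hk)
    have h0 : θ ↥(LinearMap.range f) = 0 := (hθiso _ _ e).symm.trans hVθ
    by_cases hr : LinearMap.range f = ⊤
    · exact hniso.false (LinearEquiv.ofBijective f
        ⟨LinearMap.ker_eq_bot.mp hk, LinearMap.range_eq_top.mp hr⟩)
    · exact absurd h0 (ne_of_lt (hWsub _ hrange hr))
  · have hklt : θ ↥(LinearMap.ker f) < 0 := hVsub _ hk hker
    have hqpos : 0 < θ ↥(LinearMap.range f) := by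
      rw [← hquot]; omega
    by_cases hr : LinearMap.range f = ⊤
    · rw [hr, htop, hWθ] at hqpos; omega
    · exact absurd hqpos (not_lt.mpr (le_of_lt (hWsub _ hrange hr)))
end
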